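/- arXiv:2012.04679 — 2 statements merged into one kernel-verified Lean document; each statement's English description precedes it below -/
import Mathlib

section
/- Let T ∈ ℂ^a ⊗ ℂ^b ⊗ ℂ^c be concise and let 0 ≤ k ≤ b, 0 ≤ ℓ ≤ c. Suppose that every matrix X ∈ T(A^*) has a zero lower-right block, i.e. X_{j,k'} = 0 whenever j > k and k' > ℓ (so T(A^*) is a compression space of bounded rank k + ℓ). Then the tensor rank satisfies R(T) ≥ (b − k) + (c − ℓ). -/
open scoped BigOperators

noncomputable section

/-- The ideal of all polynomials vanishing on a subset `S` of affine space `σ → ℂ`. -/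
def vanishingIdeal' {σ : Type} (S : Set (σ → ℂ)) : Ideal (MvPolynomial σ ℂ) where
  carrier := {p | ∀ x ∈ S, MvPolynomial.eval x p = 0}
  add_mem' := by
    intro p q hp hq x hx
    simp [hp x hx, hq x hx]
  zero_mem' := by
    intro x hx
    simp
  smul_mem' := by
    intro c p hp x hx
    simp [smul_eq_mul, hp x hx]

/-- The dimension of an affine algebraic set `S ⊆ ℂ^σ`: the Krull dimension of its
coordinate ring.  The empty set has dimension `⊥` (i.e. `-∞`). -/
def affineDim {σ : Type} (S : Set (σ → ℂ)) : WithBot (WithTop ℕ) :=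
  ringKrullDim (MvPolynomial σ ℂ ⧸ vanishingIdeal' S)

/-- The dimension of an affine algebraic set, as a natural number. -/
def affineDimNat {σ : Type} (S : Set (σ → ℂ)) : ℕ :=
  ENat.toNat (WithBot.unbotD 0 (affineDim S))

variable {ι₁ ι₂ ι₃ : Type} [Fintype ι₁] [Fintype ι₂] [Fintype ι₃]

/-- The affine algebraic set `Σ̂^{AB}_T ⊆ ℂ^{ι₁} × ℂ^{ι₂}`. -/
def hatSigmaAB (T : ι₁ → ι₂ → ι₃ → ℂ) : Set (ι₁ ⊕ ι₂ → ℂ) :=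
  {x | ∀ k : ι₃, ∑ i : ι₁, ∑ j : ι₂, T i j k * x (Sum.inl i) * x (Sum.inr j) = 0}

/-- The geometric rank `GR(T) = (a+b) - dim Σ̂^{AB}_T`. -/
def geomRank (T : ι₁ → ι₂ → ι₃ → ℂ) : ℕ :=
  (Fintype.card ι₁ + Fintype.card ι₂) - affineDimNat (hatSigmaAB T)

/-- The flattening `T(α)`, a `ι₂ × ι₃` matrix, for `α ∈ ℂ^{ι₁}`. -/
def sliceA (T : ι₁ → ι₂ → ι₃ → ℂ) (α : ι₁ → ℂ) : Matrix ι₂ ι₃ ℂ :=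
  Matrix.of fun j k => ∑ i : ι₁, T i j k * α i

/-- The flattening `T(β)`, a `ι₁ × ι₃` matrix, for `β ∈ ℂ^{ι₂}`. -/
def sliceB (T : ι₁ → ι₂ → ι₃ → ℂ) (β : ι₂ → ℂ) : Matrix ι₁ ι₃ ℂ :=
  Matrix.of fun i k => ∑ j : ι₂, T i j k * β j

/-- The flattening `T(γ)`, a `ι₁ × ι₂` matrix, for `γ ∈ ℂ^{ι₃}`. -/
def sliceC (T : ι₁ → ι₂ → ι₃ → ℂ) (γ : ι₃ → ℂ) : Matrix ι₁ ι₂ ℂ :=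
  Matrix.of fun i j => ∑ k : ι₃, T i j k * γ k

/-- A tensor is concise if its three flattening maps are injective. -/
def Concise (T : ι₁ → ι₂ → ι₃ → ℂ) : Prop :=
  Function.Injective (sliceA T) ∧ Function.Injective (sliceB T) ∧
    Function.Injective (sliceC T)

/-- The tensor rank: least `r` such that `T` is a sum of `r` rank-one tensors. -/
def tensorRank (T : ι₁ → ι₂ → ι₃ → ℂ) : ℕ :=
  sInf {r : ℕ | ∃ (u : Fin r → ι₁ → ℂ) (v : Fin r → ι₂ → ℂ) (w : Fin r → ι₃ → ℂ),
    T = fun i j k => ∑ s : Fin r, u s i * v s j * w s k}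

/-- The border rank: least `r` such that `T` is a limit of tensors of rank at most `r`. -/
def borderRank (T : ι₁ → ι₂ → ι₃ → ℂ) : ℕ :=
  sInf {r : ℕ | T ∈ closure {T' : ι₁ → ι₂ → ι₃ → ℂ |
    ∃ (u : Fin r → ι₁ → ℂ) (v : Fin r → ι₂ → ℂ) (w : Fin r → ι₃ → ℂ),
      T' = fun i j k => ∑ s : Fin r, u s i * v s j * w s k}}

/-- The elementary (rank-one) basis tensor `e_i ⊗ e_j ⊗ e_k`. -/
def E {a b c : ℕ} (i : Fin a) (j : Fin b) (k : Fin c) : Fin a → Fin b → Fin c → ℂ :=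
  fun i' j' k' => if i' = i ∧ j' = j ∧ k' = k then 1 else 0

/-- The Kronecker product of two 3-tensors. -/
def kron {κ₁ κ₂ κ₃ : Type} [Fintype κ₁] [Fintype κ₂] [Fintype κ₃]
    (T : ι₁ → ι₂ → ι₃ → ℂ) (T' : κ₁ → κ₂ → κ₃ → ℂ) :
    ι₁ × κ₁ → ι₂ × κ₂ → ι₃ × κ₃ → ℂ :=
  fun i j k => T i.1 j.1 k.1 * T' i.2 j.2 k.2

/-- The tensor obtained from `T` by permuting the three factors by `σ`. -/
def permuteTensor {m : ℕ} (σ : Equiv.Perm (Fin 3)) (T : Fin m → Fin m → Fin m → ℂ) :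
    Fin m → Fin m → Fin m → ℂ :=
  fun i j k => T (![i, j, k] (σ 0)) (![i, j, k] (σ 1)) (![i, j, k] (σ 2))

/-- The action of a triple of linear maps on a tensor. -/
def actTensor {m : ℕ} (g₁ g₂ g₃ : Matrix (Fin m) (Fin m) ℂ)
    (T : Fin m → Fin m → Fin m → ℂ) : Fin m → Fin m → Fin m → ℂ :=
  fun i j k => ∑ i' : Fin m, ∑ j' : Fin m, ∑ k' : Fin m,
    g₁ i i' * g₂ j j' * g₃ k k' * T i' j' k'

/-- Two tensors are equivalent if one is obtained from the other by invertible linear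
maps on each factor together with a permutation of the three factors. -/
def equivTensor {m : ℕ} (T T' : Fin m → Fin m → Fin m → ℂ) : Prop :=
  ∃ (σ : Equiv.Perm (Fin 3)) (g₁ g₂ g₃ : Matrix (Fin m) (Fin m) ℂ),
    IsUnit g₁ ∧ IsUnit g₂ ∧ IsUnit g₃ ∧
    T' = actTensor g₁ g₂ g₃ (permuteTensor σ T)

/-- `T` is `1_*`-generic: some flattening space contains a matrix of full rank. -/
def OneStarGeneric {m : ℕ} (T : Fin m → Fin m → Fin m → ℂ) : Prop :=
  (∃ α, IsUnit (sliceA T α)) ∨ (∃ β, IsUnit (sliceB T β)) ∨ (∃ γ, IsUnit (sliceC T γ))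

end

/-!
Write `T = ∑ₛ uₛ ⊗ vₛ ⊗ wₛ` with `r = R(T)` terms and let `P`, `Q` be the index sets of the
zero block, so that `T(i, β, γ) = 0` whenever `β` is supported on `P` and `γ` on `Q`.
Conciseness in the second factor makes `β ↦ (⟨vₛ, β⟩)ₛ` injective on `ℂ^P`, so some `|P|` of
the functionals `⟨vₛ, ·⟩`, indexed by `S`, form a basis of the dual of `ℂ^P`. If `γ ∈ ℂ^Q`
satisfies `⟨wₛ, γ⟩ = 0` for all `s ∉ S`, the zero block reads
`∑_{s ∈ S} uₛ(i) ⟨wₛ, γ⟩ ⟨vₛ, ·⟩ = 0`, so every `uₛ(i) ⟨wₛ, γ⟩` vanishes, `T(γ) = 0`, and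
`γ = 0` by conciseness in the third factor. Hence `γ ↦ (⟨wₛ, γ⟩)_{s ∉ S}` is injective on
`ℂ^Q`, and `|Q| ≤ r - |P|`.
-/

open Module

section LinearAlgebra

variable {K V σ : Type*} [Field K] [AddCommGroup V] [Module K V] [Fintype σ]

theorem span_range_proj_comp_eq_top {f : V →ₗ[K] σ → K} (hf : Function.Injective f) :
    Submodule.span K (Set.range fun s => LinearMap.proj s ∘ₗ f) = ⊤ := by
  classical
  have hproj : (fun s => LinearMap.proj s ∘ₗ f) = f.dualMap ∘ (Pi.basisFun K σ).dualBasis := by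
    ext s v
    simp
  rw [hproj, Set.range_comp, ← Submodule.map_span, Module.Basis.span_eq, Submodule.map_top,
    LinearMap.range_eq_top.mpr (LinearMap.dualMap_surjective_of_injective hf)]

theorem exists_linearIndepOn_ncard_eq_finrank [FiniteDimensional K V] {x : σ → V}
    (hx : Submodule.span K (Set.range x) = ⊤) :
    ∃ S : Set σ, LinearIndepOn K x S ∧ S.ncard = finrank K V := by
  classical
  obtain ⟨S, -, -, hspan, hS⟩ :=
    exists_linearIndepOn_extension (linearIndepOn_empty K x) (Set.subset_univ ∅)
  have hSspan : Submodule.span K (Set.range fun s : S => x s) = ⊤ := by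
    rw [← Set.image_eq_range, eq_top_iff, ← hx, Submodule.span_le, ← Set.image_univ]
    exact hspan
  refine ⟨S, hS, ?_⟩
  rw [← finrank_top K V, ← hSspan, finrank_span_eq_card hS, Set.ncard_eq_toFinset_card',
    Set.toFinset_card]

theorem finrank_add_finrank_le_card_of_sum_mul_eq_zero {ι W : Type*} [AddCommGroup W] [Module K W]
    [FiniteDimensional K V] [FiniteDimensional K W] {f : V →ₗ[K] σ → K}
    (hf : Function.Injective f) (g : W →ₗ[K] σ → K) (u : σ → ι → K)
    (hzero : ∀ i v w, ∑ s, u s i * f v s * g w s = 0)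
    (hg : ∀ w, (∀ s i, u s i * g w s = 0) → w = 0) :
    finrank K V + finrank K W ≤ Fintype.card σ := by
  classical
  obtain ⟨S, hS, hcard⟩ := exists_linearIndepOn_ncard_eq_finrank (span_range_proj_comp_eq_top hf)
  rw [Subspace.dual_finrank_eq, Set.ncard_eq_toFinset_card', Set.toFinset_card] at hcard
  have hinj : Function.Injective (LinearMap.funLeft K K ((↑) : ↥Sᶜ → σ) ∘ₗ g) := by
    rw [← LinearMap.ker_eq_bot, LinearMap.ker_eq_bot']
    intro w hw
    have hoff : ∀ s ∉ S, g w s = 0 := fun s hs => congrFun hw ⟨s, hs⟩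
    refine hg w fun s i => ?_
    have hsum : ∑ t : S, (u t i * g w t) • (LinearMap.proj (t : σ) ∘ₗ f) = 0 := by
      ext v
      calc (∑ t : S, (u t i * g w t) • (LinearMap.proj (t : σ) ∘ₗ f)) v
          = ∑ t : S, u t i * f v t * g w t := by simp [mul_right_comm]
        _ = ∑ t ∈ S.toFinset, u t i * f v t * g w t :=
              Finset.sum_set_coe (f := fun t => u t i * f v t * g w t) S
        _ = ∑ t, u t i * f v t * g w t := Finset.sum_subset (Finset.subset_univ _)
              fun t _ ht => by rw [hoff t (by simpa using ht), mul_zero]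
        _ = 0 := hzero i v w
    by_cases hs : s ∈ S
    · exact Fintype.linearIndependent_iff.mp hS _ hsum ⟨s, hs⟩
    · rw [hoff s hs, mul_zero]
  calc finrank K V + finrank K W ≤ finrank K V + Fintype.card ↥Sᶜ := by
        grw [LinearMap.finrank_le_finrank_of_injective hinj, Module.finrank_fintype_fun_eq_card]
    _ = Fintype.card σ := by
        rw [Fintype.card_compl_set, ← hcard, Nat.add_sub_cancel' (set_fintype_card_le_univ S)]

end LinearAlgebra

theorem Fin.ncard_setOf_le_val (n m : ℕ) : {j : Fin n | m ≤ (j : ℕ)}.ncard = n - m := by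
  rw [← Set.ncard_image_of_injective _ Fin.val_injective]
  have : Fin.val '' {j : Fin n | m ≤ (j : ℕ)} = Set.Ico m n := by
    ext x
    simp only [Set.mem_image, Set.mem_ofPred_eq, Set.mem_Ico]
    constructor
    · rintro ⟨j, hj, rfl⟩
      exact ⟨hj, j.isLt⟩
    · rintro ⟨h₁, h₂⟩
      exact ⟨⟨x, h₂⟩, h₁, rfl⟩
  rw [this, Set.ncard_eq_toFinset_card', Set.toFinset_Ico, Nat.card_Ico]

section Tensor

variable {ι₁ ι₂ ι₃ : Type}

theorem sliceA_single_one [Fintype ι₁] [DecidableEq ι₁] (T : ι₁ → ι₂ → ι₃ → ℂ) (i : ι₁) (j : ι₂) (k : ι₃) :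
    sliceA T (Pi.single i 1) j k = T i j k := by
  simp [sliceA, Pi.single_apply]

theorem exists_eq_sum_rank_one [Fintype ι₁] [Fintype ι₂] (T : ι₁ → ι₂ → ι₃ → ℂ) :
    ∃ (r : ℕ) (u : Fin r → ι₁ → ℂ) (v : Fin r → ι₂ → ℂ) (w : Fin r → ι₃ → ℂ),
      T = fun i j k => ∑ s, u s i * v s j * w s k := by
  classical
  let e := (Fintype.equivFin (ι₁ × ι₂)).symm
  refine ⟨_, fun s => Pi.single (e s).1 1, fun s => Pi.single (e s).2 1,
    fun s => T (e s).1 (e s).2, ?_⟩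
  funext i j k
  rw [e.sum_comp fun p => (Pi.single p.1 1 : ι₁ → ℂ) i * (Pi.single p.2 1 : ι₂ → ℂ) j * T p.1 p.2 k]
  simp [Fintype.sum_prod_type, Pi.single_apply]

theorem exists_eq_sum_tensorRank [Fintype ι₁] [Fintype ι₂] [Fintype ι₃] (T : ι₁ → ι₂ → ι₃ → ℂ) :
    ∃ (u : Fin (tensorRank T) → ι₁ → ℂ) (v : Fin (tensorRank T) → ι₂ → ℂ)
      (w : Fin (tensorRank T) → ι₃ → ℂ), T = fun i j k => ∑ s, u s i * v s j * w s k :=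
  Nat.sInf_mem (exists_eq_sum_rank_one T)

variable {σ : Type*} [Fintype σ] {T : ι₁ → ι₂ → ι₃ → ℂ}
  {u : σ → ι₁ → ℂ} {v : σ → ι₂ → ℂ} {w : σ → ι₃ → ℂ}

theorem sliceB_eq_of_eq_sum [Fintype ι₂] (hT : T = fun i j k => ∑ s, u s i * v s j * w s k) (β : ι₂ → ℂ) :
    sliceB T β = Matrix.of fun i k => ∑ s, u s i * (v s ⬝ᵥ β) * w s k := by
  ext i k
  simp only [sliceB, Matrix.of_apply, hT, dotProduct, Finset.sum_mul, Finset.mul_sum]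
  rw [Finset.sum_comm]
  exact Finset.sum_congr rfl fun s _ => Finset.sum_congr rfl fun j _ => by ring

theorem sliceC_eq_of_eq_sum [Fintype ι₃] (hT : T = fun i j k => ∑ s, u s i * v s j * w s k) (γ : ι₃ → ℂ) :
    sliceC T γ = Matrix.of fun i j => ∑ s, u s i * v s j * (w s ⬝ᵥ γ) := by
  ext i j
  simp only [sliceC, Matrix.of_apply, hT, dotProduct, Finset.sum_mul, Finset.mul_sum]
  rw [Finset.sum_comm]
  exact Finset.sum_congr rfl fun s _ => Finset.sum_congr rfl fun k _ => by ring

theorem sliceC_apply_eq_zero [Fintype ι₃] {P : Set ι₂} {Q : Set ι₃}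
    (hPQ : ∀ i, ∀ j ∈ P, ∀ k ∈ Q, T i j k = 0) {γ : ι₃ → ℂ} (hγ : γ ∈ Pi.spanSubset ℂ Q)
    (i : ι₁) {j : ι₂} (hj : j ∈ P) : sliceC T γ i j = 0 := by
  refine Finset.sum_eq_zero fun k _ => ?_
  by_cases hk : k ∈ Q
  · rw [hPQ i j hj k hk, zero_mul]
  · rw [Pi.mem_spanSubset_iff.mp hγ k hk, mul_zero]

theorem ncard_add_ncard_le_card_of_eq_sum [Fintype ι₂] [Fintype ι₃] (hB : Function.Injective (sliceB T))
    (hC : Function.Injective (sliceC T)) {P : Set ι₂} {Q : Set ι₃}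
    (hPQ : ∀ i, ∀ j ∈ P, ∀ k ∈ Q, T i j k = 0)
    (hT : T = fun i j k => ∑ s, u s i * v s j * w s k) :
    P.ncard + Q.ncard ≤ Fintype.card σ := by
  have hv : Function.Injective (Matrix.of v).mulVecLin := fun β β' h => hB <| by
    rw [sliceB_eq_of_eq_sum hT, sliceB_eq_of_eq_sum hT]
    ext i k
    simp only [Matrix.of_apply]
    exact Finset.sum_congr rfl fun s _ => by rw [show v s ⬝ᵥ β = v s ⬝ᵥ β' from congrFun h s]
  rw [← Pi.dim_spanSubset (R := ℂ) (s := P), ← Pi.dim_spanSubset (R := ℂ) (s := Q)]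
  refine finrank_add_finrank_le_card_of_sum_mul_eq_zero (f := (Matrix.of v).mulVecLin ∘ₗ (Pi.spanSubset ℂ P).subtype)
    (hv.comp Subtype.val_injective)
    ((Matrix.of w).mulVecLin ∘ₗ (Pi.spanSubset ℂ Q).subtype) u ?_ ?_
  · rintro i ⟨β, hβ⟩ ⟨γ, hγ⟩
    calc _ = ∑ j, sliceC T γ i j * β j := by
          simp only [sliceC_eq_of_eq_sum hT, Matrix.of_apply, Finset.sum_mul]
          rw [Finset.sum_comm]
          refine Finset.sum_congr rfl fun s _ => ?_
          change u s i * (v s ⬝ᵥ β) * (w s ⬝ᵥ γ) = _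
          rw [dotProduct, Finset.mul_sum, Finset.sum_mul]
          exact Finset.sum_congr rfl fun j _ => by ring
      _ = 0 := Finset.sum_eq_zero fun j _ => by
          by_cases hj : j ∈ P
          · rw [sliceC_apply_eq_zero hPQ hγ i hj, zero_mul]
          · rw [Pi.mem_spanSubset_iff.mp hβ j hj, mul_zero]
  · rintro ⟨γ, hγ⟩ h
    refine Subtype.ext (hC ?_)
    rw [sliceC_eq_of_eq_sum hT, sliceC_eq_of_eq_sum hT]
    ext i j
    simp only [Matrix.of_apply, ZeroMemClass.coe_zero, dotProduct_zero, mul_zero,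
      Finset.sum_const_zero]
    refine Finset.sum_eq_zero fun s _ => ?_
    rw [mul_right_comm, show u s i * (w s ⬝ᵥ γ) = 0 from h s i, zero_mul]

theorem ncard_add_ncard_le_tensorRank [Fintype ι₁] [Fintype ι₂] [Fintype ι₃] (hT : Concise T)
    {P : Set ι₂} {Q : Set ι₃} (hPQ : ∀ i, ∀ j ∈ P, ∀ k ∈ Q, T i j k = 0) :
    P.ncard + Q.ncard ≤ tensorRank T := by
  obtain ⟨u, v, w, hdec⟩ := exists_eq_sum_tensorRank T
  simpa using ncard_add_ncard_le_card_of_eq_sum hT.2.1 hT.2.2 hPQ hdec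

end Tensor

theorem stmt_8_general (a b c k l : ℕ)
    (T : Fin a → Fin b → Fin c → ℂ) (hT : Concise T)
    (hzero : ∀ (α : Fin a → ℂ) (j : Fin b) (k' : Fin c),
      k ≤ (j : ℕ) → l ≤ (k' : ℕ) → sliceA T α j k' = 0) :
    (b - k) + (c - l) ≤ tensorRank T := by
  have hblock : ∀ i, ∀ j ∈ {j : Fin b | k ≤ (j : ℕ)}, ∀ k' ∈ {k' : Fin c | l ≤ (k' : ℕ)},
      T i j k' = 0 := fun i j hj k' hk' => by
    rw [← sliceA_single_one T]
    exact hzero _ j k' hj hk'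
  simpa only [Fin.ncard_setOf_le_val] using ncard_add_ncard_le_tensorRank hT hblock

/-- If `T` is concise and `T(A^*)` is a compression space with zero
lower-right `(b-k) × (c-ℓ)` block, then `R(T) ≥ (b-k) + (c-ℓ)`. -/
theorem stmt_8 (a b c k l : ℕ) (hk : k ≤ b) (hl : l ≤ c)
    (T : Fin a → Fin b → Fin c → ℂ) (hT : Concise T)
    (hzero : ∀ (α : Fin a → ℂ) (j : Fin b) (k' : Fin c),
      k ≤ (j : ℕ) → l ≤ (k' : ℕ) → sliceA T α j k' = 0) :
    (b - k) + (c - l) ≤ tensorRank T :=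
  stmt_8_general a b c k l T hT hzero
end

section
/- Let q ≥ 2 and let T_{str,q} ∈ ℂ^{q+1} ⊗ ℂ^{q+1} ⊗ ℂ^q be Strassen's tensor, T_{str,q} = ∑_{j=1}^q ( e_0⊗e_j⊗f_j + e_j⊗e_0⊗f_j ), where e_0,…,e_q is the standard basis of ℂ^{q+1} and f_1,…,f_q is the standard basis of ℂ^q. Then GR(T_{str,q}) = 2. -/
open scoped BigOperators

/-!
Write points of `ℂ^{q+1} × ℂ^{q+1}` as `(α, β)`. The equations of `Σ̂^{AB}_T` are
`α₀ βⱼ + αⱼ β₀ = 0` for `1 ≤ j ≤ q`, so `Σ̂^{AB}_T` is covered by three images of polynomial maps: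
the linear space `{α₀ = β₀ = 0} ≅ ℂ^{2q}`, the linear space `{α = 0} ≅ ℂ^{q+1}`, and the points
`β = λ (α₀, -α₁, …, -α_q)`, parametrized by `(λ, α) ∈ ℂ^{q+2}` (this covers `α₀ ≠ 0`).

The first piece lies inside `Σ̂^{AB}_T`, so the coordinate ring of `Σ̂^{AB}_T` surjects onto a
polynomial ring in `2q` variables and `dim ≥ 2q`. Conversely, since `q + 2 ≤ 2q`, any `2q + 1`
polynomials satisfy a nontrivial algebraic relation on each piece, hence the product relation on
all of `Σ̂^{AB}_T`. This bounds the Krull dimension by `2q`, because along a strict chain of primes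
`p₀ < ⋯ < pₘ` elements `tᵢ ∈ pᵢ₊₁ \ pᵢ` are algebraically independent modulo `p₀`.
So `dim Σ̂^{AB}_T = 2q` and `GR = 2(q + 1) - 2q = 2`.
-/

open MvPolynomial

section KrullDimension

variable {K R : Type*} [Field K] [CommRing R] [Algebra K R]

lemma aeval_eq_eval₂_finSuccEquiv {m : ℕ} (t : Fin (m + 1) → R)
    (Q : MvPolynomial (Fin (m + 1)) K) :
    aeval t Q = (finSuccEquiv K m Q).eval₂ (aeval (Fin.tail t)).toRingHom (t 0) := by
  induction Q using MvPolynomial.induction_on with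
  | C c => simp [finSuccEquiv_apply]
  | add P Q hP hQ => simp [hP, hQ]
  | mul_X P i hP =>
    induction i using Fin.cases with
    | zero => simp [hP, finSuccEquiv_X_zero]
    | succ j => simp [hP, finSuccEquiv_X_succ, Fin.tail]

/-- Write `Q = X₀ᵈ · P₁` with `A := P₁(X₀ = 0) ≠ 0`, so that `Q(t) = t₀ᵈ (t₀ B + A(t₁, …))`.
As `t₀ ∉ p₀`, primality forces `t₀ B + A(t₁, …) ∈ p₀ ⊆ p₁`, and `t₀ ∈ p₁` gives `A(t₁, …) ∈ p₁`,
contradicting the induction hypothesis for the shorter chain `p₁ ≤ ⋯ ≤ pₘ`. -/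
theorem aeval_notMem_of_chain {m : ℕ} (p : Fin (m + 1) → Ideal R) (hp : ∀ k, (p k).IsPrime)
    (hmono : Monotone p) (t : Fin m → R) (ht : ∀ i, t i ∈ p i.succ)
    (ht' : ∀ i, t i ∉ p i.castSucc) {Q : MvPolynomial (Fin m) K} (hQ : Q ≠ 0) :
    aeval t Q ∉ p 0 := by
  induction m with
  | zero =>
    obtain ⟨c, rfl⟩ := C_surjective (Fin 0) Q
    have hc : IsUnit (algebraMap K R c) := (isUnit_iff_ne_zero.2 (by simpa using hQ)).map _
    rw [aeval_C]
    exact fun h => (hp 0).ne_top (Ideal.eq_top_of_isUnit_mem _ h hc)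
  | succ m ih =>
    obtain ⟨P₁, hfact, hndvd⟩ :=
      (finSuccEquiv K m Q).exists_eq_pow_rootMultiplicity_mul_and_not_dvd (by simpa using hQ) 0
    generalize (finSuccEquiv K m Q).rootMultiplicity 0 = d at hfact
    set φ := (aeval (Fin.tail t) : MvPolynomial (Fin m) K →ₐ[K] R).toRingHom
    set B := P₁.divX.eval₂ φ (t 0)
    have hval : aeval t Q = t 0 ^ d * (t 0 * B + φ (P₁.coeff 0)) := by
      rw [aeval_eq_eval₂_finSuccEquiv, hfact, Polynomial.eval₂_mul, Polynomial.eval₂_pow]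
      conv_lhs => rw [← Polynomial.X_mul_divX_add P₁]
      rw [Polynomial.eval₂_add, Polynomial.eval₂_mul, Polynomial.eval₂_C, Polynomial.eval₂_X,
        map_zero, sub_zero, Polynomial.eval₂_X]
    intro hQ₀
    rw [hval] at hQ₀
    have hsum : t 0 * B + φ (P₁.coeff 0) ∈ p 1 :=
      hmono (Fin.zero_le 1) (((hp 0).mem_or_mem hQ₀).resolve_left
        fun h => ht' 0 ((hp 0).mem_of_pow_mem _ h))
    have hA : φ (P₁.coeff 0) ∈ p 1 := by
      simpa using Ideal.sub_mem _ hsum (Ideal.mul_mem_right B _ (ht 0))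
    refine ih (p ∘ Fin.succ) (fun k => hp k.succ) (hmono.comp Fin.strictMono_succ.monotone)
      (Fin.tail t) (fun i => ht i.succ) (fun i => ?_) (Q := P₁.coeff 0) ?_ hA
    · rw [Function.comp_apply, Fin.succ_castSucc]
      exact ht' i.succ
    · simpa [Polynomial.X_dvd_iff] using hndvd

theorem ringKrullDim_le_of_forall_not_algebraicIndependent {n : ℕ}
    (h : ∀ t : Fin (n + 1) → R, ¬ AlgebraicIndependent K t) : ringKrullDim R ≤ n := by
  refine iSup_le fun ch => ?_
  suffices ch.length ≤ n by exact_mod_cast this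
  by_contra! hlen
  set p : Fin (n + 2) → Ideal R := fun i => (ch (Fin.castLE (by omega) i)).asIdeal
  have hp : StrictMono p := ch.strictMono.comp (Fin.strictMono_castLE _)
  choose t ht ht' using fun i : Fin (n + 1) => SetLike.exists_of_lt (hp i.castSucc_lt_succ)
  obtain ⟨Q, hQ, hQt⟩ : ∃ Q, Q ≠ 0 ∧ aeval t Q = 0 := by
    simpa [algebraicIndependent_iff_injective_aeval, injective_iff_map_eq_zero, and_comm]
      using h t
  exact aeval_notMem_of_chain p (fun i => (ch _).isPrime) hp.monotone t ht ht' hQ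
    (hQt ▸ (p 0).zero_mem)

end KrullDimension

lemma not_algebraicIndependent_of_card_lt {K τ : Type*} [Field K] [Fintype τ] {N : ℕ}
    (hN : Fintype.card τ < N) (t : Fin N → MvPolynomial τ K) : ¬ AlgebraicIndependent K t := by
  intro ht
  have := ht.lift_cardinalMk_le_trdeg
  simp [MvPolynomial.trdeg_of_isDomain] at this
  omega

section AffineSet

variable {σ τ : Type}

noncomputable def polyMap (g : σ → MvPolynomial τ ℂ) (x : τ → ℂ) : σ → ℂ :=
  fun v => eval x (g v)

lemma eval_aeval_eq_eval (g : σ → MvPolynomial τ ℂ) (x : τ → ℂ) (f : MvPolynomial σ ℂ) :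
    eval x (aeval g f) = eval (polyMap g x) f := by
  induction f using MvPolynomial.induction_on <;> simp_all [polyMap]

lemma vanishingIdeal'_anti {S S' : Set (σ → ℂ)} (h : S ⊆ S') :
    vanishingIdeal' S' ≤ vanishingIdeal' S :=
  fun _ hf x hx => hf x (h hx)

lemma mul_mem_vanishingIdeal'_union {S S' : Set (σ → ℂ)} {f f' : MvPolynomial σ ℂ}
    (hf : f ∈ vanishingIdeal' S) (hf' : f' ∈ vanishingIdeal' S') :
    f * f' ∈ vanishingIdeal' (S ∪ S') := by
  rintro x (hx | hx)
  · rw [eval_mul, hf x hx, zero_mul]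
  · rw [eval_mul, hf' x hx, mul_zero]

lemma exists_aeval_mem_vanishingIdeal'_range [Fintype τ] (g : σ → MvPolynomial τ ℂ) {N : ℕ}
    (hN : Fintype.card τ < N) (t : Fin N → MvPolynomial σ ℂ) :
    ∃ Q : MvPolynomial (Fin N) ℂ,
      Q ≠ 0 ∧ aeval t Q ∈ vanishingIdeal' (Set.range (polyMap g)) := by
  have hdep := not_algebraicIndependent_of_card_lt hN fun i => aeval (R := ℂ) g (t i)
  rw [algebraicIndependent_iff] at hdep
  push Not at hdep
  obtain ⟨Q, hQt, hQ⟩ := hdep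
  refine ⟨Q, hQ, ?_⟩
  rintro _ ⟨x, rfl⟩
  rw [← eval_aeval_eq_eval, ← AlgHom.comp_apply, comp_aeval, hQt, map_zero]

lemma affineDim_le_of_forall_exists_aeval_mem {S : Set (σ → ℂ)} {n : ℕ}
    (h : ∀ t : Fin (n + 1) → MvPolynomial σ ℂ,
      ∃ Q : MvPolynomial (Fin (n + 1)) ℂ, Q ≠ 0 ∧ aeval t Q ∈ vanishingIdeal' S) :
    affineDim S ≤ n := by
  refine ringKrullDim_le_of_forall_not_algebraicIndependent (K := ℂ) fun t ht => ?_
  set π := Ideal.Quotient.mkₐ ℂ (vanishingIdeal' S)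
  obtain ⟨t', rfl⟩ := (Ideal.Quotient.mkₐ_surjective ℂ _).comp_left t
  obtain ⟨Q, hQ, hQt⟩ := h t'
  refine hQ (ht ?_)
  change aeval (fun i => π (t' i)) Q = aeval _ 0
  rw [map_zero, ← comp_aeval, AlgHom.comp_apply, Ideal.Quotient.mkₐ_eq_mk,
    Ideal.Quotient.eq_zero_iff_mem]
  exact hQt

lemma ringKrullDim_le_affineDim (g : σ → MvPolynomial τ ℂ)
    (hg : Function.Surjective (aeval (R := ℂ) g)) {S : Set (σ → ℂ)}
    (hS : Set.range (polyMap g) ⊆ S) :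
    ringKrullDim (MvPolynomial τ ℂ) ≤ affineDim S := by
  have hker : ∀ f ∈ vanishingIdeal' S, (aeval g).toRingHom f = 0 := fun f hf =>
    MvPolynomial.funext fun x => by
      rw [map_zero, AlgHom.toRingHom_eq_coe, RingHom.coe_coe, eval_aeval_eq_eval]
      exact hf _ (hS ⟨x, rfl⟩)
  exact ringKrullDim_le_of_surjective _
    (Ideal.Quotient.lift_surjective_of_surjective _ hker hg)

end AffineSet

def strassen (q : ℕ) : Fin (q + 1) → Fin (q + 1) → Fin q → ℂ := fun a b c =>
  (if a = 0 ∧ b = c.succ then 1 else 0) + (if a = c.succ ∧ b = 0 then 1 else 0)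

lemma sum_E_eq_strassen (q : ℕ) :
    ∑ j : Fin q,
        (E (⟨0, q.succ_pos⟩ : Fin (q + 1)) ⟨j + 1, Nat.succ_lt_succ j.isLt⟩ j +
         E ⟨j + 1, Nat.succ_lt_succ j.isLt⟩ ⟨0, q.succ_pos⟩ j) = strassen q := by
  ext a b c
  simp only [Finset.sum_apply, Pi.add_apply, E, strassen, Finset.sum_add_distrib]
  congr 1 <;> rw [Finset.sum_eq_single c (fun j _ hj => if_neg (by tauto)) (by simp)] <;>
    simp only [and_true] <;> rfl

lemma mem_hatSigmaAB_strassen {q : ℕ} {x : Fin (q + 1) ⊕ Fin (q + 1) → ℂ} :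
    x ∈ hatSigmaAB (strassen q) ↔
      ∀ k : Fin q, x (.inl 0) * x (.inr k.succ) + x (.inl k.succ) * x (.inr 0) = 0 := by
  refine forall_congr' fun k => Eq.congr_left ?_
  simp only [strassen, add_mul, ite_mul, one_mul, zero_mul, Finset.sum_add_distrib]
  simp [ite_and, Finset.sum_ite_eq']

section Parametrizations

variable (q : ℕ)

noncomputable def cornerZeroParam :
    Fin (q + 1) ⊕ Fin (q + 1) → MvPolynomial (Fin q ⊕ Fin q) ℂ :=
  Sum.elim (Fin.cons 0 fun j => X (.inl j)) (Fin.cons 0 fun j => X (.inr j))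

noncomputable def alphaZeroParam : Fin (q + 1) ⊕ Fin (q + 1) → MvPolynomial (Fin (q + 1)) ℂ :=
  Sum.elim 0 X

noncomputable def alphaNeZeroParam :
    Fin (q + 1) ⊕ Fin (q + 1) → MvPolynomial (Option (Fin (q + 1))) ℂ :=
  Sum.elim (fun i => X (some i))
    (Fin.cons (X none * X (some 0)) fun j => -(X none * X (some j.succ)))

lemma surjective_aeval_cornerZeroParam :
    Function.Surjective (aeval (R := ℂ) (cornerZeroParam q)) := by
  refine fun p => ⟨rename (Sum.map Fin.succ Fin.succ) p, ?_⟩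
  rw [aeval_rename]
  convert aeval_X_left_apply p
  ext (j | j) <;> simp [cornerZeroParam]

lemma range_cornerZeroParam_subset :
    Set.range (polyMap (cornerZeroParam q)) ⊆ hatSigmaAB (strassen q) := by
  rintro _ ⟨x, rfl⟩
  simp [mem_hatSigmaAB_strassen, polyMap, cornerZeroParam]

lemma hatSigmaAB_strassen_subset :
    hatSigmaAB (strassen q) ⊆ Set.range (polyMap (cornerZeroParam q)) ∪
      Set.range (polyMap (alphaZeroParam q)) ∪ Set.range (polyMap (alphaNeZeroParam q)) := by
  intro x hx
  rw [mem_hatSigmaAB_strassen] at hx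
  by_cases hx₀ : x (.inl 0) = 0
  · by_cases hy₀ : x (.inr 0) = 0
    · refine Or.inl (Or.inl
        ⟨Sum.elim (fun j => x (.inl j.succ)) (fun j => x (.inr j.succ)), ?_⟩)
      ext (i | i) <;> cases i using Fin.cases <;> simp [polyMap, cornerZeroParam, hx₀, hy₀]
    · have hα : ∀ i, x (.inl i) = 0 := Fin.cases hx₀ fun j => by simpa [hx₀, hy₀] using hx j
      refine Or.inl (Or.inr ⟨fun i => x (.inr i), ?_⟩)
      ext (i | i) <;> simp [polyMap, alphaZeroParam, hα]
  · refine Or.inr ⟨(Option.elim · (x (.inr 0) / x (.inl 0)) fun i => x (.inl i)), ?_⟩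
    ext (i | i)
    · simp [polyMap, alphaNeZeroParam]
    · cases i using Fin.cases with
      | zero => simp [polyMap, alphaNeZeroParam]; field_simp
      | succ j =>
        simp [polyMap, alphaNeZeroParam]
        field_simp
        linear_combination -hx j

end Parametrizations

lemma affineDim_hatSigmaAB_strassen {q : ℕ} (hq : 2 ≤ q) :
    affineDim (hatSigmaAB (strassen q)) = (2 * q : ℕ) := by
  refine le_antisymm (affineDim_le_of_forall_exists_aeval_mem fun t => ?_) ?_
  · obtain ⟨Q₁, hQ₁, h₁⟩ := exists_aeval_mem_vanishingIdeal'_range (cornerZeroParam q)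
      (by simp; omega) t
    obtain ⟨Q₂, hQ₂, h₂⟩ := exists_aeval_mem_vanishingIdeal'_range (alphaZeroParam q)
      (by simp; omega) t
    obtain ⟨Q₃, hQ₃, h₃⟩ := exists_aeval_mem_vanishingIdeal'_range (alphaNeZeroParam q)
      (by simp; omega) t
    refine ⟨Q₁ * Q₂ * Q₃, by simp [hQ₁, hQ₂, hQ₃], ?_⟩
    rw [map_mul, map_mul]
    exact vanishingIdeal'_anti (hatSigmaAB_strassen_subset q)
      (mul_mem_vanishingIdeal'_union (mul_mem_vanishingIdeal'_union h₁ h₂) h₃)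
  · refine le_trans ?_ (ringKrullDim_le_affineDim _ (surjective_aeval_cornerZeroParam q)
      (range_cornerZeroParam_subset q))
    rw [MvPolynomial.ringKrullDim_of_isNoetherianRing, ringKrullDim_eq_zero_of_field]
    simp only [zero_add, Nat.card_eq_fintype_card, Fintype.card_sum, Fintype.card_fin, two_mul]
    rfl

/-- Strassen's tensor `T_{str,q} ∈ ℂ^{q+1} ⊗ ℂ^{q+1} ⊗ ℂ^q`, `q ≥ 2`,
has geometric rank `2`. -/
theorem stmt_16 (q : ℕ) (hq : 2 ≤ q)
    (T : Fin (q + 1) → Fin (q + 1) → Fin q → ℂ)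
    (hT : T =
      ∑ j : Fin q,
        (E (⟨0, by omega⟩ : Fin (q + 1)) ⟨(j : ℕ) + 1, by have := j.isLt; omega⟩ j +
         E ⟨(j : ℕ) + 1, by have := j.isLt; omega⟩ ⟨0, by omega⟩ j)) :
    geomRank T = 2 := by
  have hdim : affineDimNat (hatSigmaAB T) = 2 * q := by
    rw [affineDimNat, hT, sum_E_eq_strassen, affineDim_hatSigmaAB_strassen hq]
    rfl
  rw [geomRank, hdim, Fintype.card_fin]
  omega
end
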